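/- Let Φ^k, Φ^{k+1}, φ^k, φ^{k+1} be periodic grid functions and let K > 0 satisfy ‖Φ^k‖_∞ ≤ K and ‖Φ^{k+1}‖_∞ ≤ K. Set e^j = Φ^j − φ^j for j = k, k+1 and e^{k+1/2} = (1/2)(e^k + e^{k+1}). Then there exists a constant C > 0 depending only on K (independent of h, m, n and the grid functions) such that −2h²⟨η(Φ^k, Φ^{k+1}) − η(φ^k, φ^{k+1}), e^{k+1/2}⟩ ≤ C(‖e^{k+1}‖₂² + ‖e^k‖₂²). -/
import Mathlib


open scoped BigOperators
open MeasureTheory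

/-! Discrete setting: periodic grid functions on an `m × n` periodic grid are maps
`ZMod m × ZMod n → ℝ`. -/

/-- Discrete inner product `⟨φ,ψ⟩ = Σ_{i,j} φ_{i,j} ψ_{i,j}`. -/
noncomputable def gip {m n : ℕ} [NeZero m] [NeZero n] (φ ψ : ZMod m × ZMod n → ℝ) : ℝ :=
  ∑ p : ZMod m × ZMod n, φ p * ψ p

/-- Discrete periodic convolution `[f⋆φ]_{i,j} = h² Σ_{k,l} f_{k,l} φ_{i−k,j−l}`. -/
noncomputable def gconv {m n : ℕ} [NeZero m] [NeZero n] (h : ℝ) (f φ : ZMod m × ZMod n → ℝ) :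
    ZMod m × ZMod n → ℝ :=
  fun p => h ^ 2 * ∑ q : ZMod m × ZMod n, f q * φ (p.1 - q.1, p.2 - q.2)

/-- `[f⋆1] = h² Σ_{k,l} f_{k,l}`. -/
noncomputable def gconvOne {m n : ℕ} [NeZero m] [NeZero n] (h : ℝ) (f : ZMod m × ZMod n → ℝ) : ℝ :=
  h ^ 2 * ∑ q : ZMod m × ZMod n, f q

/-- A kernel is even when `f_{k,l} = f_{−k,−l}`. -/
def EvenKer {m n : ℕ} (f : ZMod m × ZMod n → ℝ) : Prop :=
  ∀ p : ZMod m × ZMod n, f (-p.1, -p.2) = f p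

/-- `‖φ‖₂² = h² Σ_{i,j} φ_{i,j}²`. -/
noncomputable def norm2sq {m n : ℕ} [NeZero m] [NeZero n] (h : ℝ) (φ : ZMod m × ZMod n → ℝ) : ℝ :=
  h ^ 2 * ∑ p : ZMod m × ZMod n, (φ p) ^ 2

/-- `‖φ‖₂ = (h² Σ_{i,j} φ_{i,j}²)^{1/2}`. -/
noncomputable def norm2 {m n : ℕ} [NeZero m] [NeZero n] (h : ℝ) (φ : ZMod m × ZMod n → ℝ) : ℝ :=
  Real.sqrt (norm2sq h φ)

/-- `‖φ‖₄⁴ = h² Σ_{i,j} φ_{i,j}⁴`. -/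
noncomputable def norm4p4 {m n : ℕ} [NeZero m] [NeZero n] (h : ℝ) (φ : ZMod m × ZMod n → ℝ) : ℝ :=
  h ^ 2 * ∑ p : ZMod m × ZMod n, (φ p) ^ 4

/-- `‖φ‖₄ = (h² Σ_{i,j} |φ_{i,j}|⁴)^{1/4}`. -/
noncomputable def norm4 {m n : ℕ} [NeZero m] [NeZero n] (h : ℝ) (φ : ZMod m × ZMod n → ℝ) : ℝ :=
  (norm4p4 h φ) ^ ((1 : ℝ) / 4)

/-- `‖φ‖_∞ = max_{i,j} |φ_{i,j}|`. -/
noncomputable def normInf {m n : ℕ} [NeZero m] [NeZero n] (φ : ZMod m × ZMod n → ℝ) : ℝ :=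
  ⨆ p : ZMod m × ZMod n, |φ p|

/-- Five-point discrete Laplacian. -/
noncomputable def glap {m n : ℕ} (h : ℝ) (φ : ZMod m × ZMod n → ℝ) : ZMod m × ZMod n → ℝ :=
  fun p => (φ (p.1 + 1, p.2) + φ (p.1 - 1, p.2) + φ (p.1, p.2 + 1) + φ (p.1, p.2 - 1) - 4 * φ p) / h ^ 2

/-- `‖∇_h φ‖₂² = Σ_{i,j} [(φ_{i+1,j}−φ_{i,j})² + (φ_{i,j+1}−φ_{i,j})²]`. -/
noncomputable def gradNormSq {m n : ℕ} [NeZero m] [NeZero n] (φ : ZMod m × ZMod n → ℝ) : ℝ :=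
  ∑ p : ZMod m × ZMod n, ((φ (p.1 + 1, p.2) - φ p) ^ 2 + (φ (p.1, p.2 + 1) - φ p) ^ 2)

/-- `‖∇_h φ‖_∞`. -/
noncomputable def gradNormInf {m n : ℕ} [NeZero m] [NeZero n] (h : ℝ) (φ : ZMod m × ZMod n → ℝ) : ℝ :=
  ⨆ p : ZMod m × ZMod n, max (|φ (p.1 + 1, p.2) - φ p| / h) (|φ (p.1, p.2 + 1) - φ p| / h)

/-- Pointwise nonlinear term `η(a,b) = (1/4)(a²+b²)(a+b)`. -/
noncomputable def etaNL {m n : ℕ} (a b : ZMod m × ZMod n → ℝ) : ZMod m × ZMod n → ℝ :=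
  fun p => (1 / 4) * ((a p) ^ 2 + (b p) ^ 2) * (a p + b p)

/-- The chemical potential
`w^{k+1/2} = η(φᵏ,φ^{k+1}) + B_c φ^{k+1/2} − B_e φ̂^{k+1/2} − [J⋆φ̂^{k+1/2}]`,
where `φ^{k+1/2} = (φᵏ+φ^{k+1})/2` and `φ̂^{k+1/2} = (3/2)φᵏ − (1/2)φ^{k−1}`. -/
noncomputable def chemPot {m n : ℕ} [NeZero m] [NeZero n] (h Bc Be : ℝ)
    (J φold φ φnew : ZMod m × ZMod n → ℝ) : ZMod m × ZMod n → ℝ :=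
  fun p => etaNL φ φnew p + Bc * ((1 / 2) * (φ p + φnew p))
    - Be * ((3 / 2) * φ p - (1 / 2) * φold p)
    - gconv h J (fun q => (3 / 2) * φ q - (1 / 2) * φold q) p

/-- Discrete energy
`F(φ) = (1/4)‖φ‖₄⁴ + ((γ_c−γ_e)/2)‖φ‖₂² + ([J⋆1]/2)‖φ‖₂² − (h²/2)⟨φ,[J⋆φ]⟩`. -/
noncomputable def Fdisc {m n : ℕ} [NeZero m] [NeZero n] (h γc γe : ℝ)
    (J φ : ZMod m × ZMod n → ℝ) : ℝ :=
  (1 / 4) * norm4p4 h φ + ((γc - γe) / 2) * norm2sq h φ + (gconvOne h J / 2) * norm2sq h φ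
    - (h ^ 2 / 2) * gip φ (gconv h J φ)

/-- Discrete pseudo energy
`ℰ(φ,ψ) = F(ψ) + ((B_c+B_e)/4)‖ψ−φ‖₂² + (h²/4)⟨[J⋆(ψ−φ)], ψ−φ⟩`. -/
noncomputable def pseudoE {m n : ℕ} [NeZero m] [NeZero n] (h γc γe Bc Be : ℝ)
    (J φ ψ : ZMod m × ZMod n → ℝ) : ℝ :=
  Fdisc h γc γe J ψ + ((Bc + Be) / 4) * norm2sq h (ψ - φ)
    + (h ^ 2 / 4) * gip (gconv h J (ψ - φ)) (ψ - φ)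

/-! Continuous setting: `Ω = (0,L₁) × (0,L₂)` with periodic boundary conditions. -/

/-- The domain `Ω = (0,L₁) × (0,L₂)`. -/
noncomputable def box (L₁ L₂ : ℝ) : Set (ℝ × ℝ) := Set.Ioo 0 L₁ ×ˢ Set.Ioo 0 L₂

/-- Periodic convolution `(J∗φ)(x) = ∫_Ω J(x−y) φ(y) dy`. -/
noncomputable def cconv (L₁ L₂ : ℝ) (J φ : ℝ × ℝ → ℝ) : ℝ × ℝ → ℝ :=
  fun x => ∫ y in box L₁ L₂, J (x.1 - y.1, x.2 - y.2) * φ y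

/-- `J∗1 = ∫_Ω J(x) dx`. -/
noncomputable def cJone (L₁ L₂ : ℝ) (J : ℝ × ℝ → ℝ) : ℝ := ∫ x in box L₁ L₂, J x

/-- `Ω`-periodicity of a function on `ℝ²`. -/
def PerFun (L₁ L₂ : ℝ) (φ : ℝ × ℝ → ℝ) : Prop :=
  ∀ x : ℝ × ℝ, φ (x.1 + L₁, x.2) = φ x ∧ φ (x.1, x.2 + L₂) = φ x

/-- The nonlocal energy
`E(φ) = (1/4)‖φ‖⁴_{L⁴} + ((γ_c − γ_e + J∗1)/2)‖φ‖²_{L²} − (1/2)⟨φ, J∗φ⟩_{L²}`. -/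
noncomputable def cE (L₁ L₂ γc γe : ℝ) (J φ : ℝ × ℝ → ℝ) : ℝ :=
  (1 / 4) * (∫ x in box L₁ L₂, (φ x) ^ 4)
  + ((γc - γe + cJone L₁ L₂ J) / 2) * (∫ x in box L₁ L₂, (φ x) ^ 2)
  - (1 / 2) * (∫ x in box L₁ L₂, φ x * cconv L₁ L₂ J φ x)

/-- The grid point `p_{i,j} = ((i−1/2)h, (j−1/2)h)`. -/
noncomputable def gridPt {m n : ℕ} (h : ℝ) (p : ZMod m × ZMod n) : ℝ × ℝ :=
  (((p.1.val : ℝ) - 1 / 2) * h, ((p.2.val : ℝ) - 1 / 2) * h)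

/-- Grid restriction of a continuous function. -/
noncomputable def gridRestrict (m n : ℕ) (h : ℝ) (F : ℝ × ℝ → ℝ) : ZMod m × ZMod n → ℝ :=
  fun p => F (gridPt h p)

/-- The continuous Laplacian on `ℝ²` (as iterated partial derivatives). -/
noncomputable def clap (g : ℝ × ℝ → ℝ) (x : ℝ × ℝ) : ℝ :=
  deriv (fun a => deriv (fun b => g (b, x.2)) a) x.1
    + deriv (fun a => deriv (fun b => g (x.1, b)) a) x.2

lemma keyAbs (K2 S T s Q L : ℝ) (hK2 : 0 ≤ K2) (hQ0 : 0 ≤ Q) (hS0 : 0 ≤ S)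
    (hs2 : s^2 ≤ 2*Q) (hSK : S ≤ 2*K2) (hL2 : L^2 ≤ 4*(S*Q)) (hT2 : T^2 ≤ 2*S)
    (hLup : L ≤ Q/4 + 4*S) :
    (1/4)*(-(S*s^2) - L*T*s + L*s^2 + Q*T*s - Q*s^2) ≤ 7*K2*Q := by
  have hSQ : S*Q ≤ 2*K2*Q := mul_le_mul_of_nonneg_right hSK hQ0
  have hSs : S*s^2 ≤ 2*K2*s^2 := mul_le_mul_of_nonneg_right hSK (sq_nonneg s)
  have hK2s : K2*s^2 ≤ 2*(K2*Q) := by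
    have := mul_le_mul_of_nonneg_left hs2 hK2; linarith
  have h1 : 0 ≤ S*s^2 := mul_nonneg hS0 (sq_nonneg s)
  have f1 : L^2 ≤ 8*(K2*Q) := by linarith
  have f2 : T^2*s^2 ≤ 8*(K2*Q) := by
    have h := mul_le_mul_of_nonneg_right hT2 (sq_nonneg s); linarith
  have h2 : -(L*T*s) ≤ 8*(K2*Q) := by nlinarith [sq_nonneg (L + T*s), f1, f2]
  have h3 : L*s^2 ≤ Q*s^2/4 + 16*(K2*Q) := by
    have h := mul_le_mul_of_nonneg_right hLup (sq_nonneg s)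
    have h' : (Q/4 + 4*S)*s^2 = Q*s^2/4 + 4*(S*s^2) := by ring
    linarith
  have h4 : Q*T*s ≤ 2*(K2*Q) + Q*s^2/2 := by
    have hts : T*s ≤ T^2/2 + s^2/2 := by nlinarith [sq_nonneg (T - s)]
    have h5 : T^2 ≤ 4*K2 := by linarith
    have hh := mul_le_mul_of_nonneg_left hts hQ0
    have hh2 := mul_le_mul_of_nonneg_left h5 hQ0
    nlinarith [hh, hh2]
  have h6 : 0 ≤ Q*s^2 := mul_nonneg hQ0 (sq_nonneg s)
  have h7 : 0 ≤ K2*Q := mul_nonneg hK2 hQ0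
  linarith

lemma keyPt (K a b e1 e2 : ℝ) (ha : a^2 ≤ K^2) (hb : b^2 ≤ K^2) :
    -((1/4)*(a^2+b^2)*(a+b) - (1/4)*((a-e1)^2+(b-e2)^2)*((a-e1)+(b-e2))) * (e1+e2)
      ≤ 7*K^2*(e1^2+e2^2) := by
  have hK2 : (0:ℝ) ≤ K^2 := le_trans (sq_nonneg a) ha
  have key := keyAbs (K^2) (a^2+b^2) (a+b) (e1+e2) (e1^2+e2^2) (2*(a*e1+b*e2))
    hK2 (by positivity) (by positivity)
    (by nlinarith [sq_nonneg (e1-e2)]) (by linarith)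
    (by nlinarith [sq_nonneg (a*e2 - b*e1)]) (by nlinarith [sq_nonneg (a-b)])
    (by nlinarith [sq_nonneg (e1/2 - 2*a), sq_nonneg (e2/2 - 2*b)])
  calc -((1/4)*(a^2+b^2)*(a+b) - (1/4)*((a-e1)^2+(b-e2)^2)*((a-e1)+(b-e2))) * (e1+e2)
      = (1/4)*(-((a^2+b^2)*(e1+e2)^2) - (2*(a*e1+b*e2))*(a+b)*(e1+e2)
        + (2*(a*e1+b*e2))*(e1+e2)^2 + (e1^2+e2^2)*(a+b)*(e1+e2)
        - (e1^2+e2^2)*(e1+e2)^2) := by ring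
    _ ≤ 7*K^2*(e1^2+e2^2) := key

lemma abs_le_normInf {m n : ℕ} [NeZero m] [NeZero n] (φ : ZMod m × ZMod n → ℝ)
    (p : ZMod m × ZMod n) : |φ p| ≤ normInf φ := by
  simp only [normInf]
  exact le_ciSup (Set.Finite.bddAbove (Set.finite_range (fun q => |φ q|))) p

/-- estimate for the nonlinear error inner product in the nAC
convergence analysis, inequality (converge-nAC-10). -/
theorem stmt19 (K : ℝ) (hK : 0 < K) :
    ∃ C > (0:ℝ), ∀ (m n : ℕ) [NeZero m] [NeZero n] (h : ℝ), 0 < h →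
      ∀ Φk Φkp φk φkp : ZMod m × ZMod n → ℝ,
        normInf Φk ≤ K → normInf Φkp ≤ K →
        -2 * h ^ 2 * gip (fun p => etaNL Φk Φkp p - etaNL φk φkp p)
            (fun p => (1 / 2) * ((Φk p - φk p) + (Φkp p - φkp p)))
          ≤ C * (norm2sq h (fun p => Φkp p - φkp p) + norm2sq h (fun p => Φk p - φk p)) := by
  refine ⟨7 * K ^ 2, by positivity, ?_⟩
  intro m n _ _ h hh Φk Φkp φk φkp hΦk hΦkp
  have hpt : ∀ p : ZMod m × ZMod n,
      -2 * ((etaNL Φk Φkp p - etaNL φk φkp p) * ((1 / 2) * ((Φk p - φk p) + (Φkp p - φkp p))))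
        ≤ 7 * K ^ 2 * ((Φkp p - φkp p) ^ 2 + (Φk p - φk p) ^ 2) := by
    intro p
    have ha : (Φk p) ^ 2 ≤ K ^ 2 := by
      have := abs_le_normInf Φk p
      nlinarith [abs_nonneg (Φk p), sq_abs (Φk p)]
    have hb : (Φkp p) ^ 2 ≤ K ^ 2 := by
      have := abs_le_normInf Φkp p
      nlinarith [abs_nonneg (Φkp p), sq_abs (Φkp p)]
    have key := keyPt K (Φk p) (Φkp p) (Φk p - φk p) (Φkp p - φkp p) ha hb
    calc -2 * ((etaNL Φk Φkp p - etaNL φk φkp p)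
            * ((1 / 2) * ((Φk p - φk p) + (Φkp p - φkp p))))
        = -((1/4)*((Φk p)^2+(Φkp p)^2)*(Φk p + Φkp p)
            - (1/4)*((Φk p - (Φk p - φk p))^2+(Φkp p - (Φkp p - φkp p))^2)
              *((Φk p - (Φk p - φk p))+(Φkp p - (Φkp p - φkp p))))
          * ((Φk p - φk p) + (Φkp p - φkp p)) := by
          simp only [etaNL]; ring
      _ ≤ 7*K^2*((Φk p - φk p)^2 + (Φkp p - φkp p)^2) := key
      _ = 7 * K ^ 2 * ((Φkp p - φkp p) ^ 2 + (Φk p - φk p) ^ 2) := by ring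
  have hsum := Finset.sum_le_sum (s := (Finset.univ : Finset (ZMod m × ZMod n)))
    (fun p (_ : p ∈ Finset.univ) => hpt p)
  simp only [gip, norm2sq]
  have hh2 : (0:ℝ) ≤ h ^ 2 := sq_nonneg h
  calc -2 * h ^ 2 * ∑ p : ZMod m × ZMod n,
        (etaNL Φk Φkp p - etaNL φk φkp p) * ((1 / 2) * ((Φk p - φk p) + (Φkp p - φkp p)))
      = h ^ 2 * ∑ p : ZMod m × ZMod n,
        -2 * ((etaNL Φk Φkp p - etaNL φk φkp p)
          * ((1 / 2) * ((Φk p - φk p) + (Φkp p - φkp p)))) := by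
        rw [Finset.mul_sum, Finset.mul_sum]; exact Finset.sum_congr rfl (fun p _ => by ring)
    _ ≤ h ^ 2 * ∑ p : ZMod m × ZMod n,
        7 * K ^ 2 * ((Φkp p - φkp p) ^ 2 + (Φk p - φk p) ^ 2) :=
        mul_le_mul_of_nonneg_left hsum hh2
    _ = 7 * K ^ 2 * (h ^ 2 * (∑ p : ZMod m × ZMod n, (Φkp p - φkp p) ^ 2)
        + h ^ 2 * (∑ p : ZMod m × ZMod n, (Φk p - φk p) ^ 2)) := by
        simp only [Finset.mul_sum]
        rw [← Finset.sum_add_distrib, Finset.mul_sum]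
        exact Finset.sum_congr rfl (fun p _ => by ring)
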